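/- arXiv:1711.04995 — 5 statements merged into one kernel-verified Lean document; each statement's English description precedes it below -/
import Mathlib

section
/- Let F : ℝ^n × ℝ^n → ℝ^q be a smooth (C^∞) map and let φ : (ℝ^m)^{r+1} → ℝ^n be a smooth map satisfying the parameter PDE for F. Then for every smooth curve y : ℝ → ℝ^m, defining x(t) = φ(y(t), y'(t), …, y^{(r)}(t)), one has F(x(t), x'(t)) = 0 for all t ∈ ℝ. -/
/-!
The jet `s ↦ (y s, y' s, …, y⁽ʳ⁾ s)` has derivative `(y', …, y⁽ʳ⁺¹⁾)`, the shifted jet. By the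
chain rule, `x'(t)` is therefore `L_τφ` evaluated at the `(r+2)`-jet of `y` at `t`, and the
parameter PDE at that point is the claim.
-/

/-- The operator `L_τ`: `L_τφ(y_0,…,y_{r+1}) = Σ_{i=0}^r (∂φ/∂y_i)(y_0,…,y_r)(y_{i+1})`,
where `∂φ/∂y_i` is the partial Fréchet derivative of `φ` in its `i`-th block variable. -/
noncomputable def Ltau {m n r : ℕ}
    (φ : (Fin (r+1) → (Fin m → ℝ)) → (Fin n → ℝ))
    (z : Fin (r+2) → (Fin m → ℝ)) : Fin n → ℝ :=
  ∑ i : Fin (r+1), fderiv ℝ φ (fun j => z j.castSucc) (Pi.single i (z i.succ))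

theorem hasDerivAt_iteratedDeriv_pi {𝕜 E : Type*} [NontriviallyNormedField 𝕜]
    [NormedAddCommGroup E] [NormedSpace 𝕜 E] {k : ℕ} {y : 𝕜 → E} (hy : ContDiff 𝕜 k y)
    (t : 𝕜) :
    HasDerivAt (fun s (i : Fin k) => iteratedDeriv i y s)
      (fun i : Fin k => iteratedDeriv (i + 1) y t) t := by
  refine hasDerivAt_pi.2 fun i => ?_
  rw [iteratedDeriv_succ]
  exact (hy.differentiable_iteratedDeriv i (by exact_mod_cast i.isLt) t).hasDerivAt

theorem Ltau_iteratedDeriv {m n r : ℕ} {φ : (Fin (r+1) → (Fin m → ℝ)) → (Fin n → ℝ)}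
    (hφ : Differentiable ℝ φ) {y : ℝ → (Fin m → ℝ)} (hy : ContDiff ℝ (r + 1) y) (t : ℝ) :
    Ltau φ (fun j : Fin (r+2) => iteratedDeriv j y t) =
      deriv (fun s => φ (fun i : Fin (r+1) => iteratedDeriv i y s)) t := by
  have hjet : HasDerivAt (fun s => φ (fun i : Fin (r+1) => iteratedDeriv i y s))
      (fderiv ℝ φ _ fun i : Fin (r+1) => iteratedDeriv (i + 1) y t) t :=
    (hφ _).hasFDerivAt.comp_hasDerivAt t (hasDerivAt_iteratedDeriv_pi hy t)
  rw [hjet.deriv, Ltau, ← map_sum]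
  congr 1
  exact Finset.univ_sum_single fun i : Fin (r+1) => iteratedDeriv (i + 1) y t

theorem stmt_0_general (n m q r : ℕ)
    (F : (Fin n → ℝ) × (Fin n → ℝ) → (Fin q → ℝ))
    (φ : (Fin (r+1) → (Fin m → ℝ)) → (Fin n → ℝ)) (hφ : ContDiff ℝ (⊤ : ℕ∞) φ)
    (hPDE : ∀ z : Fin (r+2) → (Fin m → ℝ),
      F (φ (fun j => z j.castSucc), Ltau φ z) = 0)
    (y : ℝ → (Fin m → ℝ)) (hy : ContDiff ℝ (⊤ : ℕ∞) y) :
    ∀ t : ℝ,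
      F (φ (fun i : Fin (r+1) => iteratedDeriv i.val y t),
         deriv (fun s : ℝ => φ (fun i : Fin (r+1) => iteratedDeriv i.val y s)) t) = 0 := by
  intro t
  rw [← Ltau_iteratedDeriv (hφ.differentiable (by simp)) (hy.of_le (by exact_mod_cast le_top)) t]
  exact hPDE fun j => iteratedDeriv j y t

/-- If a smooth `φ` satisfies the parameter PDE for `F`, then for every smooth curve `y`,
the curve `x(t) = φ(y(t), y'(t), …, y^{(r)}(t))` satisfies `F(x(t), x'(t)) = 0`. -/
theorem stmt_0 (n m q r : ℕ) (hn : 0 < n) (hm : 0 < m) (hq : 0 < q)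
    (F : (Fin n → ℝ) × (Fin n → ℝ) → (Fin q → ℝ)) (hF : ContDiff ℝ (⊤ : ℕ∞) F)
    (φ : (Fin (r+1) → (Fin m → ℝ)) → (Fin n → ℝ)) (hφ : ContDiff ℝ (⊤ : ℕ∞) φ)
    (hPDE : ∀ z : Fin (r+2) → (Fin m → ℝ),
      F (φ (fun j => z j.castSucc), Ltau φ z) = 0)
    (y : ℝ → (Fin m → ℝ)) (hy : ContDiff ℝ (⊤ : ℕ∞) y) :
    ∀ t : ℝ,
      F (φ (fun i : Fin (r+1) => iteratedDeriv i.val y t),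
         deriv (fun s : ℝ => φ (fun i : Fin (r+1) => iteratedDeriv i.val y s)) t) = 0 :=
  stmt_0_general n m q r F φ hφ hPDE y hy
end

section
/- Let F : ℝ^n × ℝ^n → ℝ^q be a smooth (C^∞) map and let φ : (ℝ^m)^{r+1} → ℝ^n be a smooth map. Suppose that for every smooth curve y : ℝ → ℝ^m, defining x(t) = φ(y(t), y'(t), …, y^{(r)}(t)), one has F(x(t), x'(t)) = 0 for all t ∈ ℝ. Then φ satisfies the parameter PDE for F, i.e. F(φ(y_0,…,y_r), L_τφ(y_0,…,y_{r+1})) = 0 for all vectors y_0,…,y_{r+1} ∈ ℝ^m. -/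
open Finset

noncomputable def taylorCurve {E : Type*} [AddCommMonoid E] [Module ℝ E]
    (v : ℕ → E) (N : ℕ) (t : ℝ) : E :=
  ∑ k ∈ range N, (t ^ k / k.factorial) • v k

lemma hasDerivAt_pow_succ_div_factorial (k : ℕ) (t : ℝ) :
    HasDerivAt (fun t : ℝ => t ^ (k + 1) / (k + 1).factorial) (t ^ k / k.factorial) t := by
  refine ((hasDerivAt_pow (k + 1) t).div_const ((k + 1).factorial : ℝ)).congr_deriv ?_
  rw [Nat.factorial_succ, Nat.cast_mul, Nat.add_sub_cancel]
  field_simp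

section TaylorCurve

variable {E : Type*}

section Module

variable [AddCommMonoid E] [Module ℝ E]

lemma taylorCurve_zero_right (v : ℕ → E) : taylorCurve v 0 = 0 := by
  funext t
  simp [taylorCurve]

lemma taylorCurve_succ_apply_zero (v : ℕ → E) (N : ℕ) : taylorCurve v (N + 1) 0 = v 0 := by
  rw [taylorCurve, sum_range_succ']
  simp

end Module

variable [NormedAddCommGroup E] [NormedSpace ℝ E]

lemma contDiff_taylorCurve (v : ℕ → E) (N : ℕ) : ContDiff ℝ (⊤ : ℕ∞) (taylorCurve v N) :=
  ContDiff.sum fun k _ => ((contDiff_id.pow k).div_const _).smul contDiff_const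

lemma hasDerivAt_taylorCurve_succ (v : ℕ → E) (N : ℕ) (t : ℝ) :
    HasDerivAt (taylorCurve v (N + 1)) (taylorCurve (fun k => v (k + 1)) N t) t := by
  have hsplit : taylorCurve v (N + 1) =
      fun t : ℝ => ∑ k ∈ range N, (t ^ (k + 1) / (k + 1).factorial) • v (k + 1) + v 0 := by
    funext t
    simp [taylorCurve, sum_range_succ']
  rw [hsplit]
  exact (HasDerivAt.fun_sum fun k _ =>
    (hasDerivAt_pow_succ_div_factorial k t).smul_const (v (k + 1))).add_const (v 0)

lemma deriv_taylorCurve_succ (v : ℕ → E) (N : ℕ) :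
    deriv (taylorCurve v (N + 1)) = taylorCurve (fun k => v (k + 1)) N :=
  funext fun t => (hasDerivAt_taylorCurve_succ v N t).deriv

lemma iteratedDeriv_taylorCurve (j : ℕ) (v : ℕ → E) (N : ℕ) :
    iteratedDeriv j (taylorCurve v N) = taylorCurve (fun k => v (k + j)) (N - j) := by
  induction j generalizing v N with
  | zero => rfl
  | succ j ih =>
    rw [iteratedDeriv_succ']
    cases N with
    | zero =>
      funext t
      simp [taylorCurve_zero_right, iteratedDeriv_const_zero]
    | succ N =>
      rw [deriv_taylorCurve_succ, ih, Nat.add_sub_add_right]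
      simp only [add_assoc]

lemma iteratedDeriv_taylorCurve_apply_zero (v : ℕ → E) {N j : ℕ} (hj : j < N) :
    iteratedDeriv j (taylorCurve v N) 0 = v j := by
  obtain ⟨M, hM⟩ : ∃ M, N - j = M + 1 := ⟨N - j - 1, by omega⟩
  rw [iteratedDeriv_taylorCurve, hM, taylorCurve_succ_apply_zero, zero_add]

end TaylorCurve

lemma exists_contDiff_iteratedDeriv_zero_eq {E : Type*} [NormedAddCommGroup E] [NormedSpace ℝ E]
    {N : ℕ} (z : Fin N → E) :
    ∃ y : ℝ → E, ContDiff ℝ (⊤ : ℕ∞) y ∧ ∀ k : Fin N, iteratedDeriv k y 0 = z k := by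
  refine ⟨taylorCurve (fun k => if h : k < N then z ⟨k, h⟩ else 0) N,
    contDiff_taylorCurve _ _, fun k => ?_⟩
  rw [iteratedDeriv_taylorCurve_apply_zero _ k.isLt, dif_pos k.isLt]

lemma hasDerivAt_iteratedDeriv_jet {E : Type*} [NormedAddCommGroup E] [NormedSpace ℝ E]
    {r : ℕ} {y : ℝ → E} (hy : ContDiff ℝ (r + 1) y) (t : ℝ) :
    HasDerivAt (fun s (i : Fin (r + 1)) => iteratedDeriv i y s)
      (fun i : Fin (r + 1) => iteratedDeriv (i + 1) y t) t := by
  rw [hasDerivAt_pi]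
  intro i
  rw [iteratedDeriv_succ]
  exact ((hy.differentiable_iteratedDeriv i (mod_cast i.isLt)) t).hasDerivAt

lemma Ltau_eq_fderiv {m n r : ℕ} (φ : (Fin (r + 1) → (Fin m → ℝ)) → (Fin n → ℝ))
    (z : Fin (r + 2) → (Fin m → ℝ)) :
    Ltau φ z = fderiv ℝ φ (fun j => z j.castSucc) (fun i => z i.succ) := by
  rw [Ltau, ← map_sum, univ_sum_single]

theorem stmt_1_general (n m q r : ℕ)
    (F : (Fin n → ℝ) × (Fin n → ℝ) → (Fin q → ℝ))
    (φ : (Fin (r+1) → (Fin m → ℝ)) → (Fin n → ℝ)) (hφ : ContDiff ℝ (⊤ : ℕ∞) φ)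
    (hcurve : ∀ y : ℝ → (Fin m → ℝ), ContDiff ℝ (⊤ : ℕ∞) y → ∀ t : ℝ,
      F (φ (fun i : Fin (r+1) => iteratedDeriv i.val y t),
         deriv (fun s : ℝ => φ (fun i : Fin (r+1) => iteratedDeriv i.val y s)) t) = 0) :
    ∀ z : Fin (r+2) → (Fin m → ℝ),
      F (φ (fun j => z j.castSucc), Ltau φ z) = 0 := by
  intro z
  obtain ⟨y, hy, hyz⟩ := exists_contDiff_iteratedDeriv_zero_eq z
  have hjet : (fun i : Fin (r + 1) => iteratedDeriv i y 0) = fun j => z j.castSucc :=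
    funext fun i => hyz i.castSucc
  have hvel : (fun i : Fin (r + 1) => iteratedDeriv (i + 1) y 0) = fun i => z i.succ :=
    funext fun i => hyz i.succ
  have hφ' : HasFDerivAt φ (fderiv ℝ φ (fun j => z j.castSucc))
      (fun i : Fin (r + 1) => iteratedDeriv i y 0) := by
    rw [hjet]
    exact (hφ.differentiable (by simp) _).hasFDerivAt
  have hx : HasDerivAt (fun s => φ (fun i : Fin (r + 1) => iteratedDeriv i y s))
      (fderiv ℝ φ (fun j => z j.castSucc) (fun i => z i.succ)) 0 := by
    rw [← hvel]
    exact hφ'.comp_hasDerivAt 0 (hasDerivAt_iteratedDeriv_jet (hy.of_le (mod_cast le_top)) 0)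
  simpa only [Ltau_eq_fderiv, hjet, hx.deriv] using hcurve y hy 0

/-- If for every smooth curve `y`, the curve `x(t) = φ(y(t), y'(t), …, y^{(r)}(t))`
satisfies `F(x(t), x'(t)) = 0`, then `φ` satisfies the parameter PDE for `F`. -/
theorem stmt_1 (n m q r : ℕ) (hn : 0 < n) (hm : 0 < m) (hq : 0 < q)
    (F : (Fin n → ℝ) × (Fin n → ℝ) → (Fin q → ℝ)) (hF : ContDiff ℝ (⊤ : ℕ∞) F)
    (φ : (Fin (r+1) → (Fin m → ℝ)) → (Fin n → ℝ)) (hφ : ContDiff ℝ (⊤ : ℕ∞) φ)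
    (hcurve : ∀ y : ℝ → (Fin m → ℝ), ContDiff ℝ (⊤ : ℕ∞) y → ∀ t : ℝ,
      F (φ (fun i : Fin (r+1) => iteratedDeriv i.val y t),
         deriv (fun s : ℝ => φ (fun i : Fin (r+1) => iteratedDeriv i.val y s)) t) = 0) :
    ∀ z : Fin (r+2) → (Fin m → ℝ),
      F (φ (fun j => z j.castSucc), Ltau φ z) = 0 :=
  stmt_1_general n m q r F φ hφ hcurve
end

section
/- Let F : ℝ^n × ℝ^n → ℝ^q be smooth, φ : (ℝ^m)^{r+1} → ℝ^n and ψ : (ℝ^n)^{s+1} → ℝ^m smooth maps, and assume the two-sided flatness identities: (i) for every smooth curve y : ℝ → ℝ^m, setting x(t) = φ(y(t), y'(t), …, y^{(r)}(t)), one has F(x(t), x'(t)) = 0 and y(t) = ψ(x(t), x'(t), …, x^{(s)}(t)) for all t; (ii) for every smooth curve x : ℝ → ℝ^n with F(x(t), x'(t)) = 0 for all t, setting y(t) = ψ(x(t), x'(t), …, x^{(s)}(t)), one has x(t) = φ(y(t), y'(t), …, y^{(r)}(t)) for all t. Then the map y_0 ↦ φ(y_0, 0, …, 0) is a bijection from ℝ^m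 onto the equilibrium variety {x ∈ ℝ^n : F(x,0) = 0}, with inverse x_0 ↦ ψ(x_0, 0, …, 0). -/
/-
A constant curve `t ↦ c` is smooth, has zero derivative, and its `k`-jet is `(c, 0, …, 0)`.
Feeding the constant curves `y ≡ y₀` and `x ≡ x₀` (the latter solves `F(x, ẋ) = 0` exactly
when `x₀` is an equilibrium) into the two flatness identities gives the three claims.
-/

theorem iteratedDeriv_const_jet {𝕜 F : Type*} [NontriviallyNormedField 𝕜]
    [NormedAddCommGroup F] [NormedSpace 𝕜 F] (k : ℕ) (c : F) (t : 𝕜) :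
    (fun i : Fin (k + 1) => iteratedDeriv i.val (fun _ : 𝕜 => c) t) = Pi.single 0 c := by
  funext i
  simp only [iteratedDeriv_const, Pi.single_apply, Fin.ext_iff, Fin.val_zero]

theorem stmt_7_general (n m q r s : ℕ)
    (F : (Fin n → ℝ) × (Fin n → ℝ) → (Fin q → ℝ))
    (φ : (Fin (r+1) → (Fin m → ℝ)) → (Fin n → ℝ))
    (ψ : (Fin (s+1) → (Fin n → ℝ)) → (Fin m → ℝ))
    (hforward : ∀ y : ℝ → (Fin m → ℝ), ContDiff ℝ (⊤ : ℕ∞) y → ∀ t : ℝ,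
      F (φ (fun i : Fin (r+1) => iteratedDeriv i.val y t),
         deriv (fun τ : ℝ => φ (fun i : Fin (r+1) => iteratedDeriv i.val y τ)) t) = 0 ∧
      y t = ψ (fun j : Fin (s+1) => iteratedDeriv j.val
        (fun τ : ℝ => φ (fun i : Fin (r+1) => iteratedDeriv i.val y τ)) t))
    (hbackward : ∀ x : ℝ → (Fin n → ℝ), ContDiff ℝ (⊤ : ℕ∞) x →
      (∀ t : ℝ, F (x t, deriv x t) = 0) → ∀ t : ℝ,
      x t = φ (fun i : Fin (r+1) => iteratedDeriv i.val
        (fun τ : ℝ => ψ (fun j : Fin (s+1) => iteratedDeriv j.val x τ)) t)) :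
    (∀ y₀ : Fin m → ℝ, F (φ (Pi.single (0 : Fin (r+1)) y₀), 0) = 0) ∧
    (∀ y₀ : Fin m → ℝ,
      ψ (Pi.single (0 : Fin (s+1)) (φ (Pi.single (0 : Fin (r+1)) y₀))) = y₀) ∧
    (∀ x₀ : Fin n → ℝ, F (x₀, 0) = 0 →
      φ (Pi.single (0 : Fin (r+1)) (ψ (Pi.single (0 : Fin (s+1)) x₀))) = x₀) := by
  refine ⟨fun y₀ => ?_, fun y₀ => ?_, fun x₀ hx₀ => ?_⟩
  · simpa [iteratedDeriv_const_jet] using (hforward (fun _ => y₀) contDiff_const 0).1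
  · simpa [iteratedDeriv_const_jet] using ((hforward (fun _ => y₀) contDiff_const 0).2).symm
  · have hsolution : ∀ t : ℝ, F ((fun _ : ℝ => x₀) t, deriv (fun _ : ℝ => x₀) t) = 0 := by
      simpa using fun _ : ℝ => hx₀
    simpa [iteratedDeriv_const_jet] using (hbackward (fun _ => x₀) contDiff_const hsolution 0).symm

/-- If `(φ, ψ)` realize a two-sided (Lie–Bäcklund / flatness) correspondence between
smooth curves `y` in `ℝ^m` and smooth solutions `x` of `F(x, ẋ) = 0`, then
`y₀ ↦ φ(y₀,0,…,0)` is a bijection from `ℝ^m` onto the equilibrium variety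
`{x : F(x,0) = 0}`, with inverse `x₀ ↦ ψ(x₀,0,…,0)`. -/
theorem stmt_7 (n m q r s : ℕ) (hn : 0 < n) (hm : 0 < m) (hq : 0 < q)
    (F : (Fin n → ℝ) × (Fin n → ℝ) → (Fin q → ℝ)) (hF : ContDiff ℝ (⊤ : ℕ∞) F)
    (φ : (Fin (r+1) → (Fin m → ℝ)) → (Fin n → ℝ)) (hφ : ContDiff ℝ (⊤ : ℕ∞) φ)
    (ψ : (Fin (s+1) → (Fin n → ℝ)) → (Fin m → ℝ)) (hψ : ContDiff ℝ (⊤ : ℕ∞) ψ)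
    (hforward : ∀ y : ℝ → (Fin m → ℝ), ContDiff ℝ (⊤ : ℕ∞) y → ∀ t : ℝ,
      F (φ (fun i : Fin (r+1) => iteratedDeriv i.val y t),
         deriv (fun τ : ℝ => φ (fun i : Fin (r+1) => iteratedDeriv i.val y τ)) t) = 0 ∧
      y t = ψ (fun j : Fin (s+1) => iteratedDeriv j.val
        (fun τ : ℝ => φ (fun i : Fin (r+1) => iteratedDeriv i.val y τ)) t))
    (hbackward : ∀ x : ℝ → (Fin n → ℝ), ContDiff ℝ (⊤ : ℕ∞) x →
      (∀ t : ℝ, F (x t, deriv x t) = 0) → ∀ t : ℝ,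
      x t = φ (fun i : Fin (r+1) => iteratedDeriv i.val
        (fun τ : ℝ => ψ (fun j : Fin (s+1) => iteratedDeriv j.val x τ)) t)) :
    (∀ y₀ : Fin m → ℝ, F (φ (Pi.single (0 : Fin (r+1)) y₀), 0) = 0) ∧
    (∀ y₀ : Fin m → ℝ,
      ψ (Pi.single (0 : Fin (s+1)) (φ (Pi.single (0 : Fin (r+1)) y₀))) = y₀) ∧
    (∀ x₀ : Fin n → ℝ, F (x₀, 0) = 0 →
      φ (Pi.single (0 : Fin (r+1)) (ψ (Pi.single (0 : Fin (s+1)) x₀))) = x₀) :=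
  stmt_7_general n m q r s F φ ψ hforward hbackward
end

section
/- Let F : ℝ^n × ℝ^n → ℝ^q and f : ℝ^n × ℝ^m → ℝ^n be differentiable maps with F(x, f(x,u)) = 0 for all (x,u). Fix (x,u) and suppose that the linear map ∂F/∂p(x, f(x,u)) : ℝ^n → ℝ^q has rank n − m and that ∂f/∂u(x,u) : ℝ^m → ℝ^n is injective. Then the range of ∂f/∂u(x,u) equals the kernel of ∂F/∂p(x, f(x,u)). -/
/-! Differentiating `F (x, f (x, ·)) = 0` gives `∂F/∂p ∘ ∂f/∂u = 0`, so the range of `∂f/∂u` lies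
in the kernel of `∂F/∂p`. By injectivity the range has dimension `m`, and by rank–nullity so has
the kernel. -/

open Module

theorem LinearMap.range_eq_ker_of_injective_of_comp_eq_zero {K V W U : Type*} [Field K]
    [AddCommGroup V] [Module K V] [AddCommGroup W] [Module K W] [FiniteDimensional K W]
    [AddCommGroup U] [Module K U] (A : W →ₗ[K] U) (B : V →ₗ[K] W)
    (hB : Function.Injective B) (hAB : A ∘ₗ B = 0)
    (hrank : finrank K (range A) = finrank K W - finrank K V) :
    range B = ker A := by
  have : FiniteDimensional K V := Module.Finite.of_injective B hB
  have hVW : finrank K V ≤ finrank K W := LinearMap.finrank_le_finrank_of_injective hB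
  have hrangeB : finrank K (range B) = finrank K V := LinearMap.finrank_range_of_inj hB
  have hrankNullity := LinearMap.finrank_range_add_finrank_ker A
  exact Submodule.eq_of_le_of_finrank_eq (LinearMap.range_le_ker_iff.mpr hAB) (by omega)

theorem fderiv_comp_eq_zero_of_comp_eq_const {𝕜 E F G : Type*} [NontriviallyNormedField 𝕜]
    [NormedAddCommGroup E] [NormedSpace 𝕜 E] [NormedAddCommGroup F] [NormedSpace 𝕜 F]
    [NormedAddCommGroup G] [NormedSpace 𝕜 G] {g : F → G} {h : E → F} {u : E} {c : G}
    (hg : DifferentiableAt 𝕜 g (h u)) (hh : DifferentiableAt 𝕜 h u) (hc : ∀ v, g (h v) = c) :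
    (fderiv 𝕜 g (h u)).comp (fderiv 𝕜 h u) = 0 := by
  rw [← fderiv_comp u hg hh, show g ∘ h = fun _ => c from funext hc, fderiv_const_apply]

theorem stmt_9_general (n m q : ℕ)
    (F : (Fin n → ℝ) × (Fin n → ℝ) → (Fin q → ℝ)) (hF : Differentiable ℝ F)
    (f : (Fin n → ℝ) × (Fin m → ℝ) → (Fin n → ℝ)) (hf : Differentiable ℝ f)
    (hFf : ∀ (x : Fin n → ℝ) (u : Fin m → ℝ), F (x, f (x, u)) = 0)
    (x : Fin n → ℝ) (u : Fin m → ℝ)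
    (hrank : Module.finrank ℝ
      (LinearMap.range (fderiv ℝ (fun p => F (x, p)) (f (x, u)) : (Fin n → ℝ) →ₗ[ℝ] (Fin q → ℝ))) = n - m)
    (hinj : Function.Injective (fderiv ℝ (fun u' => f (x, u')) u)) :
    LinearMap.range (fderiv ℝ (fun u' => f (x, u')) u : (Fin m → ℝ) →ₗ[ℝ] (Fin n → ℝ)) =
      LinearMap.ker (fderiv ℝ (fun p => F (x, p)) (f (x, u)) : (Fin n → ℝ) →ₗ[ℝ] (Fin q → ℝ)) := by
  have hFx : Differentiable ℝ (fun p => F (x, p)) := hF.comp (by fun_prop)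
  have hfx : Differentiable ℝ (fun u' => f (x, u')) := hf.comp (by fun_prop)
  have hcomp := fderiv_comp_eq_zero_of_comp_eq_const (g := fun p => F (x, p))
    (h := fun u' => f (x, u')) (hFx (f (x, u))) (hfx u) (hFf x)
  refine LinearMap.range_eq_ker_of_injective_of_comp_eq_zero _ _ hinj ?_ ?_
  · rw [← ContinuousLinearMap.toLinearMap_comp, hcomp, ContinuousLinearMap.toLinearMap_zero]
  · rwa [finrank_fin_fun, finrank_fin_fun]

/-- If `F(x, f(x,u)) = 0` everywhere, `∂F/∂p(x,f(x,u))` has rank `n - m`, and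
`∂f/∂u(x,u)` is injective, then the range of `∂f/∂u(x,u)` equals the kernel of
`∂F/∂p(x,f(x,u))`. -/
theorem stmt_9 (n m q : ℕ) (hn : 0 < n) (hm : 0 < m) (hq : 0 < q) (hmn : m ≤ n)
    (F : (Fin n → ℝ) × (Fin n → ℝ) → (Fin q → ℝ)) (hF : Differentiable ℝ F)
    (f : (Fin n → ℝ) × (Fin m → ℝ) → (Fin n → ℝ)) (hf : Differentiable ℝ f)
    (hFf : ∀ (x : Fin n → ℝ) (u : Fin m → ℝ), F (x, f (x, u)) = 0)
    (x : Fin n → ℝ) (u : Fin m → ℝ)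
    (hrank : Module.finrank ℝ
      (LinearMap.range (fderiv ℝ (fun p => F (x, p)) (f (x, u)) : (Fin n → ℝ) →ₗ[ℝ] (Fin q → ℝ))) = n - m)
    (hinj : Function.Injective (fderiv ℝ (fun u' => f (x, u')) u)) :
    LinearMap.range (fderiv ℝ (fun u' => f (x, u')) u : (Fin m → ℝ) →ₗ[ℝ] (Fin n → ℝ)) =
      LinearMap.ker (fderiv ℝ (fun p => F (x, p)) (f (x, u)) : (Fin n → ℝ) →ₗ[ℝ] (Fin q → ℝ)) :=
  stmt_9_general n m q F hF f hf hFf x u hrank hinj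
end

section
/- Let F : ℝ^n × ℝ^n → ℝ^q be smooth and let φ : (ℝ^m)^{r+1} → ℝ^n be a smooth map satisfying the parameter PDE for F. Fix y_0 ∈ ℝ^m and let y* = (y_0, 0, …, 0) ∈ (ℝ^m)^{r+1}, x* = φ(y*), C_x = ∂F/∂x(x*, 0), C_p = ∂F/∂p(x*, 0), and P_i = (∂φ/∂y_i)(y*) for 0 ≤ i ≤ r. Then: C_x ∘ P_0 = 0; C_x ∘ P_i + C_p ∘ P_{i−1} = 0 for every 1 ≤ i ≤ r; and C_p ∘ P_r = 0. -/
/-!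
Since `L_τφ(z) = Dφ(init z)(tail z)`, the parameter PDE says that
`z ↦ F(φ(init z), Dφ(init z)(tail z))` vanishes identically. Differentiating at
`z* = (y₀, 0, …, 0)`, where `tail z* = 0`, the second derivative of `φ` drops out and one
gets `C_x (Dφ(y*)(init w)) + C_p (Dφ(y*)(tail w)) = 0` for every direction `w`.
Taking `w` supported in a single block gives the three identities.
-/

namespace Fin

variable {n : ℕ} {M : Type*} [AddCommMonoid M]

theorem tail_single_zero (x : M) : tail (Pi.single 0 x : Fin (n + 1) → M) = 0 :=
  tail_update_zero _ _

theorem tail_single_succ (i : Fin n) (x : M) :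
    tail (Pi.single i.succ x : Fin (n + 1) → M) = Pi.single i x :=
  tail_update_succ _ _ _

theorem init_single_last (x : M) : init (Pi.single (last n) x : Fin (n + 1) → M) = 0 :=
  init_update_last _ _

theorem init_single_castSucc (i : Fin n) (x : M) :
    init (Pi.single i.castSucc x : Fin (n + 1) → M) = Pi.single i x :=
  init_update_castSucc _ _ _

theorem init_single_zero (x : M) :
    init (Pi.single 0 x : Fin (n + 2) → M) = Pi.single 0 x :=
  init_single_castSucc 0 x

variable (R : Type*) [Semiring R] [TopologicalSpace M] [Module R M]

def initCLM : (Fin (n + 1) → M) →L[R] (Fin n → M) :=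
  .pi fun j => .proj j.castSucc

def tailCLM : (Fin (n + 1) → M) →L[R] (Fin n → M) :=
  .pi fun j => .proj j.succ

end Fin

section

variable {E : Type*} [NormedAddCommGroup E] [NormedSpace ℝ E]
  {G : Type*} [NormedAddCommGroup G] [NormedSpace ℝ G]
  {K : Type*} [NormedAddCommGroup K] [NormedSpace ℝ K]

theorem fderiv_prod_apply_eq_add {F : E × G → K} {x : E} {p : G}
    (hF : DifferentiableAt ℝ F (x, p)) (a : E) (b : G) :
    fderiv ℝ F (x, p) (a, b) =
      fderiv ℝ (fun x => F (x, p)) x a + fderiv ℝ (fun p => F (x, p)) p b := by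
  have hx : HasFDerivAt (fun x => F (x, p)) ((fderiv ℝ F (x, p)).comp (.inl ℝ E G)) x :=
    hF.hasFDerivAt.comp x (hasFDerivAt_prodMk_left x p)
  have hp : HasFDerivAt (fun p => F (x, p)) ((fderiv ℝ F (x, p)).comp (.inr ℝ E G)) p :=
    hF.hasFDerivAt.comp p (hasFDerivAt_prodMk_right x p)
  rw [hx.fderiv, hp.fderiv, ContinuousLinearMap.comp_apply, ContinuousLinearMap.comp_apply,
    ← map_add]
  simp

theorem fderiv_apply_eq_zero_of_forall_fderiv_eq_zero {E' : Type*} [NormedAddCommGroup E']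
    [NormedSpace ℝ E'] {F : G × G → K} {φ : E → G} (π S : E' →L[ℝ] E) {z₀ : E'}
    (hF : DifferentiableAt ℝ F (φ (π z₀), 0)) (hφ : ContDiffAt ℝ 2 φ (π z₀)) (hS : S z₀ = 0)
    (hPDE : ∀ z, F (φ (π z), fderiv ℝ φ (π z) (S z)) = 0) (w : E') :
    fderiv ℝ F (φ (π z₀), 0) (fderiv ℝ φ (π z₀) (π w), fderiv ℝ φ (π z₀) (S w)) = 0 := by
  have hφ' : HasFDerivAt φ (fderiv ℝ φ (π z₀)) (π z₀) :=
    (hφ.differentiableAt two_ne_zero).hasFDerivAt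
  have hDφ : HasFDerivAt (fderiv ℝ φ) (fderiv ℝ (fderiv ℝ φ) (π z₀)) (π z₀) :=
    ((hφ.fderiv_right (m := 1) le_rfl).differentiableAt one_ne_zero).hasFDerivAt
  have hH := (hφ'.comp z₀ π.hasFDerivAt).prodMk
    ((hDφ.comp z₀ π.hasFDerivAt).clm_apply S.hasFDerivAt)
  simp only [Function.comp_def, hS, map_zero, add_zero] at hH
  have hF' : HasFDerivAt F (fderiv ℝ F (φ (π z₀), 0)) (φ (π z₀), fderiv ℝ φ (π z₀) (S z₀)) := by
    rw [hS, map_zero]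
    exact hF.hasFDerivAt
  have hFH := hF'.comp z₀ hH
  rw [show F ∘ _ = fun _ => 0 from funext hPDE] at hFH
  simpa using congrArg (· w) (hFH.unique (hasFDerivAt_const 0 z₀))

end

theorem Ltau_eq_fderiv_init_tail {m n r : ℕ} (φ : (Fin (r+1) → (Fin m → ℝ)) → (Fin n → ℝ))
    (z : Fin (r+2) → (Fin m → ℝ)) :
    Ltau φ z = fderiv ℝ φ (Fin.init z) (Fin.tail z) := by
  rw [Ltau, ← map_sum, Finset.univ_sum_single]
  rfl

/-- Differentiating the parameter PDE at a point `y* = (y₀,0,…,0)`: with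
`x* = φ(y*)`, `C_x = ∂F/∂x(x*,0)`, `C_p = ∂F/∂p(x*,0)`, and
`P_i = (∂φ/∂y_i)(y*)`, one has `C_x ∘ P_0 = 0`, `C_x ∘ P_i + C_p ∘ P_{i-1} = 0`
for `1 ≤ i ≤ r`, and `C_p ∘ P_r = 0`. -/
theorem stmt_11 (n m q r : ℕ)
    (F : (Fin n → ℝ) × (Fin n → ℝ) → (Fin q → ℝ)) (hF : ContDiff ℝ (⊤ : ℕ∞) F)
    (φ : (Fin (r+1) → (Fin m → ℝ)) → (Fin n → ℝ)) (hφ : ContDiff ℝ (⊤ : ℕ∞) φ)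
    (hPDE : ∀ z : Fin (r+2) → (Fin m → ℝ),
      F (φ (fun j => z j.castSucc), Ltau φ z) = 0)
    (y₀ : Fin m → ℝ) :
    (∀ v : Fin m → ℝ,
      fderiv ℝ (fun x => F (x, 0)) (φ (Pi.single (0 : Fin (r+1)) y₀))
        (fderiv ℝ φ (Pi.single (0 : Fin (r+1)) y₀) (Pi.single (0 : Fin (r+1)) v)) = 0) ∧
    (∀ (i : ℕ) (h1 : 1 ≤ i) (h2 : i ≤ r), ∀ v : Fin m → ℝ,
      fderiv ℝ (fun x => F (x, 0)) (φ (Pi.single (0 : Fin (r+1)) y₀))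
        (fderiv ℝ φ (Pi.single (0 : Fin (r+1)) y₀)
          (Pi.single (⟨i, by omega⟩ : Fin (r+1)) v)) +
      fderiv ℝ (fun p => F (φ (Pi.single (0 : Fin (r+1)) y₀), p)) 0
        (fderiv ℝ φ (Pi.single (0 : Fin (r+1)) y₀)
          (Pi.single (⟨i - 1, by omega⟩ : Fin (r+1)) v)) = 0) ∧
    (∀ v : Fin m → ℝ,
      fderiv ℝ (fun p => F (φ (Pi.single (0 : Fin (r+1)) y₀), p)) 0
        (fderiv ℝ φ (Pi.single (0 : Fin (r+1)) y₀) (Pi.single (Fin.last r) v)) = 0) := by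
  set y := (Pi.single 0 y₀ : Fin (r+1) → Fin m → ℝ)
  have hFd : Differentiable ℝ F := hF.differentiable (by simp)
  have hkey : ∀ w : Fin (r+2) → Fin m → ℝ,
      fderiv ℝ (fun x => F (x, 0)) (φ y) (fderiv ℝ φ y (Fin.init w)) +
        fderiv ℝ (fun p => F (φ y, p)) 0 (fderiv ℝ φ y (Fin.tail w)) = 0 := by
    intro w
    have hy : Fin.initCLM ℝ (Pi.single 0 y₀ : Fin (r+2) → Fin m → ℝ) = y :=
      Fin.init_single_zero y₀
    have := fderiv_apply_eq_zero_of_forall_fderiv_eq_zero (Fin.initCLM ℝ) (Fin.tailCLM ℝ)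
      (z₀ := (Pi.single 0 y₀ : Fin (r+2) → Fin m → ℝ))
      (hFd _) (hφ.contDiffAt.of_le (WithTop.coe_le_coe.mpr le_top)) (Fin.tail_single_zero y₀)
      (fun z => Ltau_eq_fderiv_init_tail φ z ▸ hPDE z) w
    rwa [hy, fderiv_prod_apply_eq_add (hFd _)] at this
  refine ⟨fun v => ?_, fun i h1 h2 v => ?_, fun v => ?_⟩
  · have := hkey (Pi.single 0 v)
    rwa [Fin.init_single_zero, Fin.tail_single_zero, map_zero, map_zero, add_zero] at this
  · have hidx : (⟨i - 1, by omega⟩ : Fin (r+1)).succ = (⟨i, by omega⟩ : Fin (r+1)).castSucc := by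
      ext; simp; omega
    have := hkey (Pi.single (⟨i - 1, by omega⟩ : Fin (r+1)).succ v)
    rwa [Fin.tail_single_succ, hidx, Fin.init_single_castSucc] at this
  · have := hkey (Pi.single (Fin.last r).succ v)
    rwa [Fin.tail_single_succ, Fin.succ_last, Fin.init_single_last, map_zero, map_zero,
      zero_add] at this
end
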